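/- None of the prefixes of Φ = φ^ω(0) of length n with 19 ≤ n ≤ 29 are irreducibly square-free, where φ(0)=01202120102120210, φ(1)=12010201210201021, φ(2)=20121012021012102. -/

import Mathlib

/-! The iterates φᵐ(0) are nested prefixes of Φ, so its short prefixes are read off φ²(0). In the
prefix of length `n`, deleting the letter at (0-based) position 17 for `n ≤ 23`, 19 for
`24 ≤ n ≤ 28`, and 26 for `n = 29` leaves a square-free word. Square-freeness of these finite
words is decided by locating squares by position and period. -/

/-- A word has a square if some nonempty `u` with `u ++ u` an infix. -/
def HasSquare (w : List (Fin 3)) : Prop :=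
  ∃ u : List (Fin 3), u ≠ [] ∧ (u ++ u) <:+: w

def SquareFree (w : List (Fin 3)) : Prop := ¬ HasSquare w

/-- `u` occurs as a factor of the infinite word `x`. -/
def InfFactor (u : List (Fin 3)) (x : ℕ → Fin 3) : Prop :=
  ∃ m : ℕ, ∀ i < u.length, u.getD i 0 = x (m + i)

def InfSquareFree (x : ℕ → Fin 3) : Prop :=
  ¬ ∃ u : List (Fin 3), u ≠ [] ∧ InfFactor (u ++ u) x

/-- A square-free word is irreducibly square-free if deleting any interior
letter creates a square. -/
def IrrSF (w : List (Fin 3)) : Prop :=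
  SquareFree w ∧
    ∀ (w1 w2 : List (Fin 3)) (a : Fin 3),
      w = w1 ++ [a] ++ w2 → w1 ≠ [] → w2 ≠ [] → HasSquare (w1 ++ w2)

/-- The uniform morphism φ of length 17. -/
def phi : Fin 3 → List (Fin 3) := ![[0,1,2,0,2,1,2,0,1,0,2,1,2,0,2,1,0], [1,2,0,1,0,2,0,1,2,1,0,2,0,1,0,2,1], [2,0,1,2,1,0,1,2,0,2,1,0,1,2,1,0,2]]

def phiW (w : List (Fin 3)) : List (Fin 3) := w.flatMap phi

/-- The infinite fixed point `Φ = φ^ω(0)`. -/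
def Phi (n : ℕ) : Fin 3 := ((phiW^[n+1]) [0]).getD n 0

theorem hasSquare_iff_exists_drop_take {w : List (Fin 3)} :
    HasSquare w ↔ ∃ k < w.length, ∃ m < w.length, 0 < m ∧ k + m + m ≤ w.length ∧
      (w.drop k).take m = (w.drop (k + m)).take m := by
  constructor
  · rintro ⟨u, hu, s, t, rfl⟩
    have hm : 0 < u.length := List.length_pos_iff.mpr hu
    simp only [List.length_append]
    refine ⟨s.length, by omega, u.length, by omega, hm, by omega, ?_⟩
    simp [List.drop_append, ← List.drop_drop]
  · rintro ⟨k, -, m, -, hm, hkm, hsq⟩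
    have hlen : 0 < ((w.drop k).take m).length := by
      simp only [List.length_take, List.length_drop]; omega
    refine ⟨(w.drop k).take m, List.ne_nil_of_length_pos hlen, ?_⟩
    have : (w.drop k).take m ++ (w.drop k).take m = (w.drop k).take (m + m) := by
      rw [List.take_add, List.drop_drop, hsq]
    rw [this]
    exact ((List.take_prefix _ _).isInfix).trans (List.drop_suffix _ _).isInfix

instance : DecidablePred HasSquare :=
  fun _ => decidable_of_iff _ hasSquare_iff_exists_drop_take.symm

instance : DecidablePred SquareFree := fun w => inferInstanceAs (Decidable ¬HasSquare w)

theorem not_irrSF_of_squareFree_eraseIdx {w : List (Fin 3)} {i : ℕ} (hi₀ : 0 < i)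
    (hi : i + 1 < w.length) (hsf : SquareFree (w.eraseIdx i)) : ¬IrrSF w := by
  rintro ⟨-, hirr⟩
  refine hsf (List.eraseIdx_eq_take_drop_succ w i ▸ hirr _ _ w[i] ?_ ?_ ?_)
  · simp
  · exact List.ne_nil_of_length_pos (by simp only [List.length_take]; omega)
  · exact List.ne_nil_of_length_pos (by simp only [List.length_drop]; omega)

theorem length_phiW (w : List (Fin 3)) : (phiW w).length = 17 * w.length := by
  induction w with
  | nil => rfl
  | cons a w ih =>
    have hlen : (phi a).length = 17 := by fin_cases a <;> rfl
    show (phi a ++ phiW w).length = 17 * (w.length + 1)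
    rw [List.length_append, hlen, ih]
    ring

theorem length_iterate_phiW (m : ℕ) : (phiW^[m] [0]).length = 17 ^ m := by
  induction m with
  | zero => rfl
  | succ m ih => rw [Function.iterate_succ_apply', length_phiW, ih, pow_succ, mul_comm]

theorem iterate_phiW_prefix_succ (k : ℕ) : phiW^[k] [0] <+: phiW^[k + 1] [0] := by
  induction k with
  | zero => decide
  | succ k ih =>
    rw [Function.iterate_succ_apply', Function.iterate_succ_apply']
    exact ih.flatMap phi

theorem iterate_phiW_prefix {a b : ℕ} (h : a ≤ b) : phiW^[a] [0] <+: phiW^[b] [0] := by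
  induction b, h using Nat.le_induction with
  | base => exact List.prefix_rfl
  | succ b _ ih => exact ih.trans (iterate_phiW_prefix_succ b)

theorem Phi_eq_getElem_iterate (m : ℕ) {i : ℕ} (hi : i < (phiW^[m] [0]).length) :
    Phi i = (phiW^[m] [0])[i] := by
  have hi' : i < (phiW^[i + 1] [0]).length := by
    rw [length_iterate_phiW]
    exact (Nat.lt_pow_self (by norm_num)).trans (Nat.pow_lt_pow_right (by norm_num) (by omega))
  rw [Phi, List.getD_eq_getElem?_getD, List.getElem?_eq_getElem hi', Option.getD_some,
    (iterate_phiW_prefix (le_max_left m (i + 1))).getElem hi,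
    (iterate_phiW_prefix (le_max_right m (i + 1))).getElem hi']

theorem ofFn_Phi_eq_take (m : ℕ) {n : ℕ} (hn : n ≤ 17 ^ m) :
    List.ofFn (fun i : Fin n => Phi i) = (phiW^[m] [0]).take n := by
  apply List.ext_getElem
  · simp [length_iterate_phiW, hn]
  · intro i _ _
    simp only [List.getElem_ofFn, List.getElem_take]
    exact Phi_eq_getElem_iterate m _

theorem Phi_prefixes_19_to_29_not_irrSF (n : ℕ) (h1 : 19 ≤ n) (h2 : n ≤ 29) :
    ¬ IrrSF (List.ofFn fun i : Fin n => Phi i) := by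
  rw [ofFn_Phi_eq_take 2 (by omega)]
  refine not_irrSF_of_squareFree_eraseIdx
    (i := if n ≤ 23 then 17 else if n ≤ 28 then 19 else 26)
    (by split_ifs <;> omega) (by rw [List.length_take, length_iterate_phiW]; split_ifs <;> omega) ?_
  interval_cases n <;> decide
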